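/- arXiv:2411.06645 — 5 statements merged into one kernel-verified Lean document; each statement's English description precedes it below -/
import Mathlib

section
/- Let a > 0, γ > 0 and β, c ∈ ℝ, and set Q(v) := −a·v² + β·v + c. Then the supremum, over all measurable probability densities π : ℝ → [0, ∞) with ∫_ℝ π = 1 for which v ↦ Q(v)π(v) and v ↦ π(v)log π(v) are integrable, of ∫_ℝ (Q(v) − γ·log π(v))·π(v) dv equals β²/(4a) + c + (γ/2)·log(π_math·γ/a) (π_math the constant pi), and this supremum is attained by the Gaussian density with mean β/(2a) and variance γ/(2a). -/
/-!
Completing the square shows that the Gaussian density `g` is the Gibbs density of `Q` at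
temperature `γ`: `Q - γ log g` is the constant `V = β²/(4a) + c + (γ/2) log(πγ/a)`. Hence for any
probability density `p`,
`∫ (Q - γ log p) p = V + γ ∫ p (log g - log p) ≤ V + γ (∫ g - ∫ p) = V`,
by the pointwise Gibbs inequality `p (log g - log p) ≤ g - p`, with equality for `p = g`.
-/

open MeasureTheory ProbabilityTheory
open scoped NNReal

section

open Real

lemma mul_log_sub_log_le_sub {p q : ℝ} (hp : 0 ≤ p) (hq : 0 < q) :
    p * (log q - log p) ≤ q - p := by
  rcases hp.eq_or_lt with rfl | hp
  · simpa using hq.le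
  calc p * (log q - log p) = p * log (q / p) := by rw [log_div hq.ne' hp.ne']
    _ ≤ p * (q / p - 1) := mul_le_mul_of_nonneg_left (log_le_sub_one_of_pos (by positivity)) hp.le
    _ = q - p := by field_simp

section Gibbs

variable {α : Type*} [MeasurableSpace α] {μ : Measure α}

lemma integral_mul_log_sub_log_le {p q : α → ℝ} (hp : ∀ x, 0 ≤ p x) (hq : ∀ x, 0 < q x)
    (hpi : Integrable p μ) (hqi : Integrable q μ)
    (hint : Integrable (fun x => p x * (log (q x) - log (p x))) μ) :
    ∫ x, p x * (log (q x) - log (p x)) ∂μ ≤ ∫ x, q x ∂μ - ∫ x, p x ∂μ := by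
  rw [← integral_sub hqi hpi]
  exact integral_mono hint (hqi.sub hpi) fun x => mul_log_sub_log_le_sub (hp x) (hq x)

variable {U g : α → ℝ} {γ V : ℝ}

lemma integrable_mul_log_of_sub_mul_log_eq (hγ : γ ≠ 0) (hUg : ∀ x, U x - γ * log (g x) = V)
    (hgi : Integrable g μ) (hUgi : Integrable (fun x => U x * g x) μ) :
    Integrable (fun x => g x * log (g x)) μ := by
  refine ((hUgi.sub (hgi.const_mul V)).const_mul γ⁻¹).congr (ae_of_all _ fun x => ?_)
  have hlog : log (g x) = (U x - V) / γ := by rw [← hUg x]; field_simp; ring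
  simp only [Pi.sub_apply, hlog]
  field_simp

lemma integral_sub_mul_log_mul_eq (hUg : ∀ x, U x - γ * log (g x) = V)
    (hg1 : ∫ x, g x ∂μ = 1) :
    ∫ x, (U x - γ * log (g x)) * g x ∂μ = V := by
  simp only [hUg, integral_const_mul, hg1, mul_one]

theorem integral_sub_mul_log_mul_le (hγ : 0 < γ) (hUg : ∀ x, U x - γ * log (g x) = V)
    (hg : ∀ x, 0 < g x) (hgi : Integrable g μ) (hg1 : ∫ x, g x ∂μ = 1)
    {p : α → ℝ} (hp : ∀ x, 0 ≤ p x) (hp1 : ∫ x, p x ∂μ = 1)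
    (hUp : Integrable (fun x => U x * p x) μ) (hplog : Integrable (fun x => p x * log (p x)) μ) :
    ∫ x, (U x - γ * log (p x)) * p x ∂μ ≤ V := by
  have hpi : Integrable p μ := Integrable.of_integral_ne_zero (by rw [hp1]; exact one_ne_zero)
  have hsplit : ∀ x, (U x - γ * log (p x)) * p x
      = V * p x + γ * (p x * (log (g x) - log (p x))) := fun x => by
    rw [← hUg x]; ring
  have hint : Integrable (fun x => p x * (log (g x) - log (p x))) μ := by
    refine (((hUp.sub (hplog.const_mul γ)).sub (hpi.const_mul V)).const_mul γ⁻¹).congr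
      (ae_of_all _ fun x => ?_)
    simp only [Pi.sub_apply]
    field_simp
    linear_combination hsplit x
  calc ∫ x, (U x - γ * log (p x)) * p x ∂μ
      = V * ∫ x, p x ∂μ + γ * ∫ x, p x * (log (g x) - log (p x)) ∂μ := by
        simp only [hsplit]
        rw [integral_add (hpi.const_mul V) (hint.const_mul γ), integral_const_mul,
          integral_const_mul]
    _ ≤ V * ∫ x, p x ∂μ + γ * (∫ x, g x ∂μ - ∫ x, p x ∂μ) := by
        gcongr
        exact integral_mul_log_sub_log_le hp hg hpi hgi hint
    _ = V := by rw [hg1, hp1]; ring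

end Gibbs

lemma log_gaussianPDFReal (m : ℝ) {v : ℝ≥0} (hv : v ≠ 0) (x : ℝ) :
    log (gaussianPDFReal m v x) = -log (2 * π * v) / 2 - (x - m) ^ 2 / (2 * v) := by
  have hpos : (0 : ℝ) < 2 * π * v := by positivity
  rw [gaussianPDFReal, log_mul (inv_ne_zero (sqrt_pos.2 hpos).ne') (exp_ne_zero _), log_inv,
    log_exp, log_sqrt hpos.le]
  ring

lemma integrable_mul_gaussianPDFReal {m : ℝ} {v : ℝ≥0} (hv : v ≠ 0) {f : ℝ → ℝ}
    (hf : Integrable f (gaussianReal m v)) :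
    Integrable (fun x => f x * gaussianPDFReal m v x) := by
  rw [gaussianReal_of_var_ne_zero _ hv, integrable_withDensity_iff_integrable_smul'
    (measurable_gaussianPDF _ _) (ae_of_all _ fun _ => ENNReal.ofReal_lt_top)] at hf
  simpa [gaussianPDF, ENNReal.toReal_ofReal (gaussianPDFReal_nonneg _ _ _), mul_comm] using hf

lemma integrable_quadratic_gaussianReal (m : ℝ) (v : ℝ≥0) (c₂ c₁ c₀ : ℝ) :
    Integrable (fun x => c₂ * x ^ 2 + c₁ * x + c₀) (gaussianReal m v) :=
  ((((memLp_id_gaussianReal 2).integrable_sq).const_mul c₂).add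
    ((memLp_one_iff_integrable.1 (memLp_id_gaussianReal 1)).const_mul c₁)).add
    (integrable_const c₀)

lemma neg_mul_sq_add_sub_mul_log_gaussianPDFReal {a γ : ℝ} (β c : ℝ) (ha : 0 < a) (hγ : 0 < γ)
    {v : ℝ≥0} (hv : (v : ℝ) = γ / (2 * a)) (x : ℝ) :
    -a * x ^ 2 + β * x + c - γ * log (gaussianPDFReal (β / (2 * a)) v x)
      = β ^ 2 / (4 * a) + c + γ / 2 * log (π * γ / a) := by
  have hv0 : v ≠ 0 := by rw [← NNReal.coe_ne_zero, hv]; positivity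
  rw [log_gaussianPDFReal _ hv0, hv, show 2 * π * (γ / (2 * a)) = π * γ / a by field_simp]
  field_simp
  ring

end

/-- The supremum over probability densities of the entropy-regularized objective
`∫ (Q v - γ log π v) π v dv` for a concave quadratic `Q(v) = -a v² + β v + c`
equals `β²/(4a) + c + (γ/2) log(π γ / a)`, and is attained by the Gaussian
density with mean `β/(2a)` and variance `γ/(2a)`. -/
theorem stmt_4 (a γ β c : ℝ) (ha : 0 < a) (hγ : 0 < γ)
    (Q : ℝ → ℝ) (hQ : Q = fun v => -a * v ^ 2 + β * v + c)
    (g : ℝ → ℝ)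
    (hg : g = fun v => (Real.sqrt (2 * Real.pi * (γ / (2 * a))))⁻¹ *
        Real.exp (-(v - β / (2 * a)) ^ 2 / (2 * (γ / (2 * a))))) :
    IsGreatest
      {x : ℝ | ∃ π : ℝ → ℝ, Measurable π ∧ (∀ v, 0 ≤ π v) ∧ (∫ v : ℝ, π v) = 1 ∧
          Integrable (fun v : ℝ => Q v * π v) ∧
          Integrable (fun v : ℝ => π v * Real.log (π v)) ∧
          x = ∫ v : ℝ, (Q v - γ * Real.log (π v)) * π v}
      (β ^ 2 / (4 * a) + c + (γ / 2) * Real.log (Real.pi * γ / a)) ∧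
    (Measurable g ∧ (∀ v, 0 ≤ g v) ∧ (∫ v : ℝ, g v) = 1 ∧
      Integrable (fun v : ℝ => Q v * g v) ∧
      Integrable (fun v : ℝ => g v * Real.log (g v)) ∧
      (∫ v : ℝ, (Q v - γ * Real.log (g v)) * g v) =
        β ^ 2 / (4 * a) + c + (γ / 2) * Real.log (Real.pi * γ / a)) := by
  set σ2 : ℝ≥0 := ⟨γ / (2 * a), by positivity⟩
  have hσ2 : σ2 ≠ 0 := by rw [← NNReal.coe_ne_zero]; exact (by positivity : γ / (2 * a) ≠ 0)
  have hgG : g = gaussianPDFReal (β / (2 * a)) σ2 := hg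
  have hgibbs : ∀ v, Q v - γ * Real.log (g v)
      = β ^ 2 / (4 * a) + c + γ / 2 * Real.log (Real.pi * γ / a) :=
    fun v => by
      rw [hQ, hgG]
      exact neg_mul_sq_add_sub_mul_log_gaussianPDFReal β c ha hγ rfl v
  have hgpos : ∀ v, 0 < g v := fun v => hgG ▸ gaussianPDFReal_pos _ _ v hσ2
  have hgm : Measurable g := hgG ▸ measurable_gaussianPDFReal _ _
  have hgi : Integrable g := hgG ▸ integrable_gaussianPDFReal _ _
  have hg1 : ∫ v, g v = 1 := hgG ▸ integral_gaussianPDFReal_eq_one _ hσ2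
  have hQg : Integrable fun v => Q v * g v := by
    rw [hQ, hgG]
    exact integrable_mul_gaussianPDFReal hσ2 (integrable_quadratic_gaussianReal _ _ _ _ _)
  have hglog := integrable_mul_log_of_sub_mul_log_eq hγ.ne' hgibbs hgi hQg
  have hval := integral_sub_mul_log_mul_eq hgibbs hg1
  refine ⟨⟨⟨g, hgm, fun v => (hgpos v).le, hg1, hQg, hglog, hval.symm⟩, ?_⟩,
    hgm, fun v => (hgpos v).le, hg1, hQg, hglog, hval⟩
  rintro _ ⟨p, -, hp, hp1, hQp, hplog, rfl⟩
  exact integral_sub_mul_log_mul_le hγ hgibbs hgpos hgi hg1 hp hp1 hQp hplog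
end

section
/- Let T > 0 and let b, k, φ, ρ, α, κ be real parameters with k + φ > 0, α − b/2 > 0 and κ > 0. Set ζ := (k+φ)/(α − b/2), w₂(t) := −((T−t)/(k+φ) + 1/(α − b/2))^{−1} − b/2, and l₁(t) := 2φρ·((T−t) + ζ)^{−1}·(1 − e^{−κ(T−t)})/κ for t ∈ [0, T]. Then l₁ is differentiable on [0, T], satisfies l₁′(t) − κ·l₁(t) + ((l₁(t) − 2φρ)/(k+φ))·(w₂(t) + b/2) = 0 for all t ∈ [0, T], and l₁(T) = 0. -/
/-! In the time to maturity `τ = T - t` one has `w₂ + b/2 = -(k+φ)/(τ+ζ)`, and the ODE for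
`l₁ = 2φρ g(τ)` becomes `g' = 1/(τ+ζ) - κ g - g/(τ+ζ)`. This holds for `g = E/(τ+ζ)` because
`E(τ) = (1 - e^{-κτ})/κ` satisfies `E' = 1 - κE`. -/

open Real

/-- `l₁ t = 2φρ · vwapProfile κ ζ (T - t)`. -/
noncomputable def vwapProfile (κ ζ τ : ℝ) : ℝ :=
  (τ + ζ)⁻¹ * ((1 - exp (-κ * τ)) / κ)

lemma hasDerivAt_one_sub_exp_neg_mul_div {κ : ℝ} (hκ : κ ≠ 0) (τ : ℝ) :
    HasDerivAt (fun τ => (1 - exp (-κ * τ)) / κ) (exp (-κ * τ)) τ := by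
  refine ((((hasDerivAt_id τ).const_mul (-κ)).exp.const_sub 1).div_const κ).congr_deriv ?_
  field_simp
  simp

lemma hasDerivAt_vwapProfile {κ ζ τ : ℝ} (hκ : κ ≠ 0) (hτ : τ + ζ ≠ 0) :
    HasDerivAt (vwapProfile κ ζ)
      ((τ + ζ)⁻¹ - κ * vwapProfile κ ζ τ - vwapProfile κ ζ τ / (τ + ζ)) τ := by
  refine ((((hasDerivAt_id τ).add_const ζ).inv hτ).mul
    (hasDerivAt_one_sub_exp_neg_mul_div hκ τ)).congr_deriv ?_
  simp only [vwapProfile, id, Pi.inv_apply]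
  field_simp
  ring

lemma inv_div_add_one_div_eq (s a c : ℝ) (ha : a ≠ 0) :
    (s / a + 1 / c)⁻¹ = a / (s + a / c) := by
  rw [← inv_div]
  field_simp

theorem stmt_6_general (T b k φ ρ α κ : ℝ) (hkφ : 0 < k + φ)
    (hα : 0 < α - b / 2) (hκ : 0 < κ)
    (ζ : ℝ) (hζ : ζ = (k + φ) / (α - b / 2))
    (w₂ l₁ : ℝ → ℝ)
    (hw₂ : w₂ = fun t => -((T - t) / (k + φ) + 1 / (α - b / 2))⁻¹ - b / 2)
    (hl₁ : l₁ = fun t => 2 * φ * ρ * ((T - t) + ζ)⁻¹ *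
        ((1 - Real.exp (-κ * (T - t))) / κ)) :
    (∀ t ∈ Set.Icc (0 : ℝ) T, DifferentiableAt ℝ l₁ t) ∧
    (∀ t ∈ Set.Icc (0 : ℝ) T,
        deriv l₁ t - κ * l₁ t + ((l₁ t - 2 * φ * ρ) / (k + φ)) * (w₂ t + b / 2) = 0) ∧
    l₁ T = 0 := by
  have hζ_pos : 0 < ζ := hζ ▸ div_pos hkφ hα
  have hτ : ∀ t ∈ Set.Icc (0 : ℝ) T, (T - t) + ζ ≠ 0 := fun t ht => by linarith [ht.2]
  have hl₁_eq : l₁ = fun t => 2 * φ * ρ * vwapProfile κ ζ (T - t) := by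
    simp only [hl₁, vwapProfile, mul_assoc]
  have hw₂_eq : ∀ t, w₂ t + b / 2 = -((k + φ) / ((T - t) + ζ)) := by
    intro t
    simp only [hw₂, inv_div_add_one_div_eq _ _ _ hkφ.ne', ← hζ]
    ring
  have hderiv : ∀ t ∈ Set.Icc (0 : ℝ) T, HasDerivAt l₁
      (2 * φ * ρ * ((((T - t) + ζ)⁻¹ - κ * vwapProfile κ ζ (T - t)
        - vwapProfile κ ζ (T - t) / ((T - t) + ζ)) * -1)) t := by
    intro t ht
    rw [hl₁_eq]
    exact (((hasDerivAt_vwapProfile hκ.ne' (hτ t ht)).comp t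
      ((hasDerivAt_id t).const_sub T)).const_mul (2 * φ * ρ))
  refine ⟨fun t ht => (hderiv t ht).differentiableAt, fun t ht => ?_, by simp [hl₁]⟩
  have hτt := hτ t ht
  rw [(hderiv t ht).deriv, hw₂_eq, hl₁_eq]
  field_simp
  ring

/-- The coefficient `l₁` solves the linear ODE
`l₁' - κ l₁ + ((l₁ - 2φρ)/(k+φ))(w₂ + b/2) = 0` on `[0, T]` with `l₁(T) = 0`. -/
theorem stmt_6 (T b k φ ρ α κ : ℝ) (hT : 0 < T) (hkφ : 0 < k + φ)
    (hα : 0 < α - b / 2) (hκ : 0 < κ)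
    (ζ : ℝ) (hζ : ζ = (k + φ) / (α - b / 2))
    (w₂ l₁ : ℝ → ℝ)
    (hw₂ : w₂ = fun t => -((T - t) / (k + φ) + 1 / (α - b / 2))⁻¹ - b / 2)
    (hl₁ : l₁ = fun t => 2 * φ * ρ * ((T - t) + ζ)⁻¹ *
        ((1 - Real.exp (-κ * (T - t))) / κ)) :
    (∀ t ∈ Set.Icc (0 : ℝ) T, DifferentiableAt ℝ l₁ t) ∧
    (∀ t ∈ Set.Icc (0 : ℝ) T,
        deriv l₁ t - κ * l₁ t + ((l₁ t - 2 * φ * ρ) / (k + φ)) * (w₂ t + b / 2) = 0) ∧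
    l₁ T = 0 :=
  stmt_6_general T b k φ ρ α κ hkφ hα hκ ζ hζ w₂ l₁ hw₂ hl₁
end

section
/- Let T > 0 and let b, k, φ, ρ, α, κ, λ, m be real parameters with k + φ > 0, α − b/2 > 0 and κ > 0. Set ζ := (k+φ)/(α − b/2), w₂(t) := −((T−t)/(k+φ) + 1/(α − b/2))^{−1} − b/2, l₁(t) := 2φρ·((T−t) + ζ)^{−1}·(1 − e^{−κ(T−t)})/κ, and l₀(t) := 2φρλm·((T−t) + ζ)^{−1}·(e^{−κ(T−t)} − 1 + κ(T−t))/κ² for t ∈ [0, T]. Then l₀ is differentiable on [0, T], satisfies l₀′(t) + ((w₂(t) + b/2)/(k+φ))·l₀(t) + λ·m·l₁(t) = 0 for all t ∈ [0, T], and l₀(T) = 0. -/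
/-!
In the time-to-maturity variable `τ = T - t`, `h(τ) = (1 - e^{-κτ})/κ` and
`g(τ) = (e^{-κτ} - 1 + κτ)/κ²` are the first and second primitives of `e^{-κτ}` vanishing at `0`,
so `g' = h`. The feedback coefficient `(w₂ + b/2)/(k+φ)` equals `-(τ + ζ)⁻¹`, and
`l₀ = λ m · 2φρ (τ + ζ)⁻¹ g`, `l₁ = 2φρ (τ + ζ)⁻¹ h`; hence `(τ + ζ) l₀` is a multiple of `g`
and the ODE reduces to `g' = h`. The terminal condition is `g(0) = 0`.
-/

open Real

theorem hasDerivAt_exp_neg_mul_sub_one_add_mul_div_sq {κ : ℝ} (hκ : κ ≠ 0) (τ : ℝ) :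
    HasDerivAt (fun τ => (exp (-κ * τ) - 1 + κ * τ) / κ ^ 2) ((1 - exp (-κ * τ)) / κ) τ := by
  have hexp : HasDerivAt (fun τ => exp (-κ * τ)) (exp (-κ * τ) * -κ) τ := by
    simpa using ((hasDerivAt_id τ).const_mul (-κ)).exp
  have hlin : HasDerivAt (fun τ => κ * τ) κ τ := by
    simpa using (hasDerivAt_id τ).const_mul κ
  refine (((hexp.sub_const 1).add hlin).div_const (κ ^ 2)).congr_deriv ?_
  field_simp
  ring

theorem hasDerivAt_const_mul_inv_add_mul {G : ℝ → ℝ} {G' c ζ τ : ℝ} (hG : HasDerivAt G G' τ)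
    (hτ : τ + ζ ≠ 0) :
    HasDerivAt (fun τ => c * (τ + ζ)⁻¹ * G τ)
      (c * (τ + ζ)⁻¹ * (G' - (τ + ζ)⁻¹ * G τ)) τ := by
  have hinv : HasDerivAt (fun τ => (τ + ζ)⁻¹) (-1 / (τ + ζ) ^ 2) τ :=
    ((hasDerivAt_id τ).add_const ζ).inv hτ
  refine ((hinv.const_mul c).mul hG).congr_deriv ?_
  field_simp
  ring

theorem div_add_one_div_inv_div {x c a : ℝ} (hc : c ≠ 0) :
    (x / c + 1 / a)⁻¹ / c = (x + c / a)⁻¹ := by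
  rw [div_eq_mul_inv, ← mul_inv, add_mul, div_mul_cancel₀ x hc, one_div_mul_eq_div]

theorem stmt_7_general (T b k φ ρ α κ lam m : ℝ) (hkφ : 0 < k + φ)
    (hα : 0 < α - b / 2) (hκ : 0 < κ)
    (ζ : ℝ) (hζ : ζ = (k + φ) / (α - b / 2))
    (w₂ l₁ l₀ : ℝ → ℝ)
    (hw₂ : w₂ = fun t => -((T - t) / (k + φ) + 1 / (α - b / 2))⁻¹ - b / 2)
    (hl₁ : l₁ = fun t => 2 * φ * ρ * ((T - t) + ζ)⁻¹ *
        ((1 - Real.exp (-κ * (T - t))) / κ))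
    (hl₀ : l₀ = fun t => 2 * φ * ρ * lam * m * ((T - t) + ζ)⁻¹ *
        ((Real.exp (-κ * (T - t)) - 1 + κ * (T - t)) / κ ^ 2)) :
    (∀ t ∈ Set.Icc (0 : ℝ) T, DifferentiableAt ℝ l₀ t) ∧
    (∀ t ∈ Set.Icc (0 : ℝ) T,
        deriv l₀ t + ((w₂ t + b / 2) / (k + φ)) * l₀ t + lam * m * l₁ t = 0) ∧
    l₀ T = 0 := by
  subst hl₀ hl₁ hw₂
  have hζ_pos : 0 < ζ := hζ ▸ div_pos hkφ hα
  have hderiv (t : ℝ) (ht : t ∈ Set.Icc (0 : ℝ) T) :=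
    (hasDerivAt_const_mul_inv_add_mul (c := 2 * φ * ρ * lam * m) (ζ := ζ)
      (hasDerivAt_exp_neg_mul_sub_one_add_mul_div_sq hκ.ne' (T - t))
      (by linarith [ht.2])).comp_const_sub T t
  refine ⟨fun t ht => (hderiv t ht).differentiableAt, fun t ht => ?_, by simp⟩
  beta_reduce
  rw [(hderiv t ht).deriv, sub_add_cancel, neg_div, div_add_one_div_inv_div hkφ.ne', ← hζ]
  ring

/-- The coefficient `l₀` solves the linear ODE
`l₀' + ((w₂ + b/2)/(k+φ)) l₀ + λ m l₁ = 0` on `[0, T]` with `l₀(T) = 0`. -/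
theorem stmt_7 (T b k φ ρ α κ lam m : ℝ) (hT : 0 < T) (hkφ : 0 < k + φ)
    (hα : 0 < α - b / 2) (hκ : 0 < κ)
    (ζ : ℝ) (hζ : ζ = (k + φ) / (α - b / 2))
    (w₂ l₁ l₀ : ℝ → ℝ)
    (hw₂ : w₂ = fun t => -((T - t) / (k + φ) + 1 / (α - b / 2))⁻¹ - b / 2)
    (hl₁ : l₁ = fun t => 2 * φ * ρ * ((T - t) + ζ)⁻¹ *
        ((1 - Real.exp (-κ * (T - t))) / κ))
    (hl₀ : l₀ = fun t => 2 * φ * ρ * lam * m * ((T - t) + ζ)⁻¹ *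
        ((Real.exp (-κ * (T - t)) - 1 + κ * (T - t)) / κ ^ 2)) :
    (∀ t ∈ Set.Icc (0 : ℝ) T, DifferentiableAt ℝ l₀ t) ∧
    (∀ t ∈ Set.Icc (0 : ℝ) T,
        deriv l₀ t + ((w₂ t + b / 2) / (k + φ)) * l₀ t + lam * m * l₁ t = 0) ∧
    l₀ T = 0 :=
  stmt_7_general T b k φ ρ α κ lam m hkφ hα hκ ζ hζ w₂ l₁ l₀ hw₂ hl₁ hl₀
end

section
/- Let T > 0 and let b, k, φ, ρ, α, κ, λ be real parameters with k + φ > 0, α − b/2 > 0, κ > 0. Let ν be a probability measure on ℝ with finite first moment m := ∫_ℝ e dν(e). Set ζ := (k+φ)/(α − b/2), w₂(t) := −((T−t)/(k+φ) + 1/(α − b/2))^{−1} − b/2, l₁(t) := 2φρ·((T−t) + ζ)^{−1}·(1 − e^{−κ(T−t)})/κ, l₀(t) := 2φρλm·((T−t) + ζ)^{−1}·(e^{−κ(T−t)} − 1 + κ(T−t))/κ², and w₁(t, μ) := l₀(t) + l₁(t)·μ. Then for all t ∈ [0, T] and all μ ∈ ℝ: ∂_t w₁(t, μ) − κμ·∂_μ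 w₁(t, μ) + λ·∫_ℝ (w₁(t, μ + e) − w₁(t, μ)) dν(e) + ((w₁(t, μ) − 2φρμ)/(k+φ))·(w₂(t) + b/2) = 0, and w₁(T, μ) = 0. -/
/-!
Since `w₂ + b/2 = -(k+φ)/D` with `D(t) = T - t + ζ`, the equation is affine in `μ`, and for an
affine `w₁ = l₀ + l₁ μ` the jump part of the generator is `λ m l₁`. Comparing coefficients of `μ`
reduces it to the two linear ODEs `l₁' = κ l₁ + (l₁ - 2φρ)/D` and `l₀' = l₀/D - λ m l₁`. Both
coefficients have the form `c g(T - t)/D(t)`, whose derivative is `(c g(T - t)/D - c g'(T - t))/D`,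
and the profiles `g₁(τ) = (1 - e^{-κτ})/κ`, `g₀(τ) = (e^{-κτ} - 1 + κτ)/κ²` satisfy
`g₁' = 1 - κ g₁` and `g₀' = g₁`.
-/

open MeasureTheory Real

namespace VWAPExecution

/-- The coefficient `l₁` of the paper, with prefactor `c = 2φρ`. -/
noncomputable def slopeCoeff (c ζ κ T t : ℝ) : ℝ :=
  c * ((T - t) + ζ)⁻¹ * ((1 - exp (-κ * (T - t))) / κ)

/-- The coefficient `l₀` of the paper, with prefactor `c = 2φρλm`. -/
noncomputable def interceptCoeff (c ζ κ T t : ℝ) : ℝ :=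
  c * ((T - t) + ζ)⁻¹ * ((exp (-κ * (T - t)) - 1 + κ * (T - t)) / κ ^ 2)

section Profiles

variable {κ : ℝ} (hκ : κ ≠ 0) (τ : ℝ)
include hκ

theorem hasDerivAt_one_sub_exp_neg_mul_div :
    HasDerivAt (fun τ => (1 - exp (-κ * τ)) / κ) (1 - κ * ((1 - exp (-κ * τ)) / κ)) τ := by
  refine ((((hasDerivAt_id' τ).const_mul (-κ)).exp.const_sub 1).div_const κ).congr_deriv ?_
  field_simp
  ring

theorem hasDerivAt_exp_neg_mul_sub_one_add_mul_div :
    HasDerivAt (fun τ => (exp (-κ * τ) - 1 + κ * τ) / κ ^ 2) ((1 - exp (-κ * τ)) / κ) τ := by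
  refine (((((hasDerivAt_id' τ).const_mul (-κ)).exp.sub_const 1).add
    ((hasDerivAt_id' τ).const_mul κ)).div_const (κ ^ 2)).congr_deriv ?_
  field_simp
  ring

end Profiles

theorem hasDerivAt_mul_inv_mul_comp_sub {g : ℝ → ℝ} {g' : ℝ} (c T ζ t : ℝ)
    (hg : HasDerivAt g g' (T - t)) (hD : (T - t) + ζ ≠ 0) :
    HasDerivAt (fun s => c * ((T - s) + ζ)⁻¹ * g (T - s))
      ((c * ((T - t) + ζ)⁻¹ * g (T - t) - c * g') / ((T - t) + ζ)) t := by
  have hT : HasDerivAt (fun s => T - s) (-1) t := by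
    simpa using (hasDerivAt_id' t).const_sub T
  refine ((((hT.add_const ζ).inv hD).const_mul c).mul (hg.comp t hT)).congr_deriv ?_
  simp only [Function.comp_apply, Pi.inv_apply]
  field_simp
  ring

variable {c ζ κ T t : ℝ}

theorem hasDerivAt_slopeCoeff (hκ : κ ≠ 0) (hD : (T - t) + ζ ≠ 0) :
    HasDerivAt (slopeCoeff c ζ κ T)
      (κ * slopeCoeff c ζ κ T t + (slopeCoeff c ζ κ T t - c) / ((T - t) + ζ)) t := by
  refine (hasDerivAt_mul_inv_mul_comp_sub c T ζ t
    (hasDerivAt_one_sub_exp_neg_mul_div hκ (T - t)) hD).congr_deriv ?_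
  simp only [slopeCoeff]
  field_simp
  ring

theorem hasDerivAt_interceptCoeff (hκ : κ ≠ 0) (hD : (T - t) + ζ ≠ 0) :
    HasDerivAt (interceptCoeff c ζ κ T)
      (interceptCoeff c ζ κ T t / ((T - t) + ζ) - slopeCoeff c ζ κ T t) t := by
  refine (hasDerivAt_mul_inv_mul_comp_sub c T ζ t
    (hasDerivAt_exp_neg_mul_sub_one_add_mul_div hκ (T - t)) hD).congr_deriv ?_
  simp only [interceptCoeff, slopeCoeff]
  ring

theorem integral_add_mul_add_sub (ν : Measure ℝ) (a c μ : ℝ) :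
    ∫ e, (a + c * (μ + e) - (a + c * μ)) ∂ν = c * ∫ e, e ∂ν := by
  simp only [add_sub_add_left_eq_sub, ← mul_sub, add_sub_cancel_left]
  exact integral_const_mul c _

theorem inv_div_add_one_div {p : ℝ} (hp : p ≠ 0) (s q : ℝ) :
    (s / p + 1 / q)⁻¹ = p / (s + p / q) := by
  have h : s / p + 1 / q = (s + p / q) / p := by
    rw [add_div, div_div_cancel_left' hp, one_div]
  rw [h, inv_div]

end VWAPExecution

open VWAPExecution

theorem stmt_8_general (T b k φ ρ α κ lam : ℝ) (hkφ : 0 < k + φ)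
    (hα : 0 < α - b / 2) (hκ : 0 < κ)
    (ν : Measure ℝ)
    (m : ℝ) (hm : m = ∫ e, e ∂ν)
    (ζ : ℝ) (hζ : ζ = (k + φ) / (α - b / 2))
    (w₂ l₁ l₀ : ℝ → ℝ) (w₁ : ℝ → ℝ → ℝ)
    (hw₂ : w₂ = fun t => -((T - t) / (k + φ) + 1 / (α - b / 2))⁻¹ - b / 2)
    (hl₁ : l₁ = fun t => 2 * φ * ρ * ((T - t) + ζ)⁻¹ *
        ((1 - Real.exp (-κ * (T - t))) / κ))
    (hl₀ : l₀ = fun t => 2 * φ * ρ * lam * m * ((T - t) + ζ)⁻¹ *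
        ((Real.exp (-κ * (T - t)) - 1 + κ * (T - t)) / κ ^ 2))
    (hw₁ : w₁ = fun t μ => l₀ t + l₁ t * μ) :
    (∀ t ∈ Set.Icc (0 : ℝ) T, ∀ μ : ℝ,
        deriv (fun s => w₁ s μ) t - κ * μ * deriv (fun x => w₁ t x) μ +
          lam * (∫ e, (w₁ t (μ + e) - w₁ t μ) ∂ν) +
          ((w₁ t μ - 2 * φ * ρ * μ) / (k + φ)) * (w₂ t + b / 2) = 0) ∧
    (∀ μ : ℝ, w₁ T μ = 0) := by
  obtain rfl : l₁ = slopeCoeff (2 * φ * ρ) ζ κ T := hl₁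
  obtain rfl : l₀ = interceptCoeff (2 * φ * ρ * lam * m) ζ κ T := hl₀
  subst hw₁ hw₂
  refine ⟨fun t ht μ => ?_, fun μ => by simp [slopeCoeff, interceptCoeff]⟩
  have hD : (T - t) + ζ ≠ 0 := by
    have : 0 < ζ := hζ ▸ div_pos hkφ hα
    linarith [ht.2]
  have h_time : HasDerivAt (fun s => interceptCoeff (2 * φ * ρ * lam * m) ζ κ T s
      + slopeCoeff (2 * φ * ρ) ζ κ T s * μ) _ t :=
    (hasDerivAt_interceptCoeff hκ.ne' hD).add ((hasDerivAt_slopeCoeff hκ.ne' hD).mul_const μ)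
  have h_space : deriv (fun x => interceptCoeff (2 * φ * ρ * lam * m) ζ κ T t
      + slopeCoeff (2 * φ * ρ) ζ κ T t * x) μ = slopeCoeff (2 * φ * ρ) ζ κ T t :=
    (((hasDerivAt_id' μ).const_mul _).const_add _).deriv.trans (mul_one _)
  have h_coupling : -((T - t) / (k + φ) + 1 / (α - b / 2))⁻¹ - b / 2 + b / 2
      = -(k + φ) / ((T - t) + ζ) := by
    rw [sub_add_cancel, inv_div_add_one_div hkφ.ne', ← hζ, neg_div]
  have h_jump : slopeCoeff (2 * φ * ρ * lam * m) ζ κ T t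
      = lam * m * slopeCoeff (2 * φ * ρ) ζ κ T t := by
    simp only [slopeCoeff]
    ring
  beta_reduce
  rw [h_time.deriv, h_space, integral_add_mul_add_sub, ← hm, h_coupling, h_jump]
  field_simp
  ring

/-- The function `w₁(t, μ) = l₀(t) + l₁(t) μ` solves the coupled equation (w₁)
from the exploratory HJB equation:
`∂ₜw₁ - κμ ∂_μ w₁ + λ ∫ (w₁(t, μ+e) - w₁(t, μ)) dν(e)
  + ((w₁ - 2φρμ)/(k+φ))(w₂ + b/2) = 0`, with `w₁(T, ·) = 0`. -/
theorem stmt_8 (T b k φ ρ α κ lam : ℝ) (hT : 0 < T) (hkφ : 0 < k + φ)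
    (hα : 0 < α - b / 2) (hκ : 0 < κ)
    (ν : Measure ℝ) [IsProbabilityMeasure ν] (hν : Integrable id ν)
    (m : ℝ) (hm : m = ∫ e, e ∂ν)
    (ζ : ℝ) (hζ : ζ = (k + φ) / (α - b / 2))
    (w₂ l₁ l₀ : ℝ → ℝ) (w₁ : ℝ → ℝ → ℝ)
    (hw₂ : w₂ = fun t => -((T - t) / (k + φ) + 1 / (α - b / 2))⁻¹ - b / 2)
    (hl₁ : l₁ = fun t => 2 * φ * ρ * ((T - t) + ζ)⁻¹ *
        ((1 - Real.exp (-κ * (T - t))) / κ))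
    (hl₀ : l₀ = fun t => 2 * φ * ρ * lam * m * ((T - t) + ζ)⁻¹ *
        ((Real.exp (-κ * (T - t)) - 1 + κ * (T - t)) / κ ^ 2))
    (hw₁ : w₁ = fun t μ => l₀ t + l₁ t * μ) :
    (∀ t ∈ Set.Icc (0 : ℝ) T, ∀ μ : ℝ,
        deriv (fun s => w₁ s μ) t - κ * μ * deriv (fun x => w₁ t x) μ +
          lam * (∫ e, (w₁ t (μ + e) - w₁ t μ) ∂ν) +
          ((w₁ t μ - 2 * φ * ρ * μ) / (k + φ)) * (w₂ t + b / 2) = 0) ∧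
    (∀ μ : ℝ, w₁ T μ = 0) :=
  stmt_8_general T b k φ ρ α κ lam hkφ hα hκ ν m hm ζ hζ w₂ l₁ l₀ w₁ hw₂ hl₁ hl₀ hw₁
end

section
/- Let A ⊆ ℝ be measurable, T > 0, and let b : [0, T] × ℝ⁴ × A → ℝ⁴ be measurable. Assume: (i) there is C₁ > 0 with |b(t, y, v) − b(t, y′, v)| ≤ C₁|y − y′| for all t ∈ [0, T], v ∈ A, y, y′ ∈ ℝ⁴; (ii) there is C₂ > 0 with |b(t, 0, v)| ≤ C₂ for all t, v. Let π(·|t, y) be, for each (t, y) ∈ [0, T] × ℝ⁴, a measurable probability density on A (nonnegative with ∫_A π(v|t, y) dv = 1) such that v ↦ b(t, y, v)π(v|t, y) is integrable for each (t, y), and assume there is C₃ > 0 with ∫_A |π(v|t, y) − π(v|t, y′)| dv ≤ C₃|y − y′| for all t, y, y′. Define b̃(t, y) := ∫_A b(t, y, v)·π(v|t, y) dv. Then for all t ∈ [0, T] and y, y′ ∈ ℝ⁴: |b̃(t, y) − b̃(t, y′)| ≤ C₁|y − y′| + (C₁|y| + C₂)·C₃·|y − y′|. In particular, b̃ is locally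 Lipschitz in y. -/
/-!
Write `π(v|y) b(y, v) - π(v|y') b(y', v) = π(v|y') (b(y, v) - b(y', v)) + (π(v|y) - π(v|y')) b(y, v)`.
The first term integrates to at most `C₁ |y - y'|` because `π(·|y')` is a probability density,
the second to at most `(C₁ |y| + C₂) C₃ |y - y'|` because `|b(y, v)| ≤ C₁ |y| + C₂`.
-/

open MeasureTheory

theorem norm_le_mul_norm_add_of_norm_sub_le {E F : Type*} [SeminormedAddCommGroup E]
    [SeminormedAddCommGroup F] {f : E → F} {C C₀ : ℝ} (hf : ∀ y y', ‖f y - f y'‖ ≤ C * ‖y - y'‖)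
    (hf0 : ‖f 0‖ ≤ C₀) (y : E) : ‖f y‖ ≤ C * ‖y‖ + C₀ :=
  calc ‖f y‖ ≤ ‖f y - f 0‖ + ‖f 0‖ := norm_le_norm_sub_add _ _
    _ ≤ C * ‖y‖ + C₀ := by simpa using add_le_add (hf y 0) hf0

theorem norm_integral_smul_sub_integral_smul_le {α E : Type*} [MeasurableSpace α]
    {μ : Measure α} [NormedAddCommGroup E] [NormedSpace ℝ E] {p q : α → ℝ} {f g : α → E}
    {δ M : ℝ} (hp : Integrable p μ) (hq : Integrable q μ)
    (hpf : Integrable (fun v => p v • f v) μ) (hqg : Integrable (fun v => q v • g v) μ)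
    (hf : AEStronglyMeasurable f μ) (hq0 : 0 ≤ᵐ[μ] q)
    (hfg : ∀ᵐ v ∂μ, ‖f v - g v‖ ≤ δ) (hfM : ∀ᵐ v ∂μ, ‖f v‖ ≤ M) :
    ‖(∫ v, p v • f v ∂μ) - ∫ v, q v • g v ∂μ‖ ≤ (∫ v, q v ∂μ) * δ + M * ∫ v, |p v - q v| ∂μ := by
  have hdiff : Integrable (fun v => (p v - q v) • f v) μ := (hp.sub hq).smul_bdd M hf hfM
  have hsplit : (fun v => p v • f v - q v • g v) =
      fun v => q v • (f v - g v) + (p v - q v) • f v := by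
    ext v
    simp only [smul_sub, sub_smul]
    abel
  have hmain : Integrable (fun v => q v • (f v - g v)) μ := by
    refine ((hpf.sub hqg).sub hdiff).congr (ae_of_all _ fun v => ?_)
    simp only [Pi.sub_apply, smul_sub, sub_smul]
    abel
  have hmain_le : ‖∫ v, q v • (f v - g v) ∂μ‖ ≤ (∫ v, q v ∂μ) * δ := by
    refine (norm_integral_le_of_norm_le (hq.mul_const δ) ?_).trans_eq (integral_mul_const _ _)
    filter_upwards [hq0, hfg] with v hqv hv
    rw [norm_smul, Real.norm_of_nonneg hqv]
    exact mul_le_mul_of_nonneg_left hv hqv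
  have hdiff_le : ‖∫ v, (p v - q v) • f v ∂μ‖ ≤ M * ∫ v, |p v - q v| ∂μ := by
    refine (norm_integral_le_of_norm_le ((hp.sub hq).abs.const_mul M) ?_).trans_eq
      (integral_const_mul _ _)
    filter_upwards [hfM] with v hv
    rw [norm_smul, Real.norm_eq_abs, mul_comm M]
    exact mul_le_mul_of_nonneg_left hv (abs_nonneg _)
  rw [← integral_sub hpf hqg, hsplit, integral_add hmain hdiff]
  exact (norm_add_le _ _).trans (add_le_add hmain_le hdiff_le)

theorem locallyLipschitz_of_norm_sub_le_mul {E F : Type*} [SeminormedAddCommGroup E]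
    [SeminormedAddCommGroup F] {f : E → F} {K L : ℝ} (hL : 0 ≤ L)
    (hf : ∀ y y', ‖f y - f y'‖ ≤ (K + L * ‖y‖) * ‖y - y'‖) : LocallyLipschitz f := by
  intro x
  refine ⟨(K + L * (‖x‖ + 1)).toNNReal, Metric.ball x 1, Metric.ball_mem_nhds x one_pos, ?_⟩
  refine LipschitzOnWith.of_dist_le_mul fun y hy y' _ => ?_
  have hy_norm : ‖y‖ ≤ ‖x‖ + 1 := by
    have := norm_le_norm_sub_add y x
    linarith [mem_ball_iff_norm.mp hy]
  rw [dist_eq_norm, dist_eq_norm]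
  calc ‖f y - f y'‖ ≤ (K + L * ‖y‖) * ‖y - y'‖ := hf y y'
    _ ≤ (K + L * (‖x‖ + 1)) * ‖y - y'‖ := by gcongr
    _ ≤ _ := by gcongr; exact Real.le_coe_toNNReal _

theorem stmt_11_general (A : Set ℝ) (hA : MeasurableSet A) (T : ℝ)
    (b : ℝ → EuclideanSpace ℝ (Fin 4) → ℝ → EuclideanSpace ℝ (Fin 4))
    (hbmeas : Measurable fun p : ℝ × EuclideanSpace ℝ (Fin 4) × ℝ => b p.1 p.2.1 p.2.2)
    (C₁ : ℝ) (hC₁ : 0 < C₁)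
    (hbLip : ∀ t ∈ Set.Icc (0 : ℝ) T, ∀ v ∈ A, ∀ y y' : EuclideanSpace ℝ (Fin 4),
        ‖b t y v - b t y' v‖ ≤ C₁ * ‖y - y'‖)
    (C₂ : ℝ) (hC₂ : 0 < C₂)
    (hb0 : ∀ t ∈ Set.Icc (0 : ℝ) T, ∀ v ∈ A, ‖b t 0 v‖ ≤ C₂)
    (π : ℝ → EuclideanSpace ℝ (Fin 4) → ℝ → ℝ)
    (hπnonneg : ∀ t y v, 0 ≤ π t y v)
    (hπone : ∀ t y, (∫ v in A, π t y v) = 1)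
    (hπint : ∀ t y, IntegrableOn (fun v => π t y v • b t y v) A)
    (C₃ : ℝ) (hC₃ : 0 < C₃)
    (hπLip : ∀ t ∈ Set.Icc (0 : ℝ) T, ∀ y y' : EuclideanSpace ℝ (Fin 4),
        (∫ v in A, |π t y v - π t y' v|) ≤ C₃ * ‖y - y'‖)
    (btilde : ℝ → EuclideanSpace ℝ (Fin 4) → EuclideanSpace ℝ (Fin 4))
    (hbtilde : btilde = fun t y => ∫ v in A, π t y v • b t y v) :
    (∀ t ∈ Set.Icc (0 : ℝ) T, ∀ y y' : EuclideanSpace ℝ (Fin 4),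
        ‖btilde t y - btilde t y'‖ ≤
          C₁ * ‖y - y'‖ + (C₁ * ‖y‖ + C₂) * C₃ * ‖y - y'‖) ∧
    (∀ t ∈ Set.Icc (0 : ℝ) T, LocallyLipschitz (btilde t)) := by
  have hπ_integrable (t y) : IntegrableOn (π t y) A :=
    Integrable.of_integral_ne_zero (by rw [hπone]; exact one_ne_zero)
  have hestimate : ∀ t ∈ Set.Icc (0 : ℝ) T, ∀ y y' : EuclideanSpace ℝ (Fin 4),
      ‖btilde t y - btilde t y'‖ ≤ C₁ * ‖y - y'‖ + (C₁ * ‖y‖ + C₂) * C₃ * ‖y - y'‖ := by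
    intro t ht y y'
    have hb_meas : Measurable (b t y) := hbmeas.comp (f := fun v => (t, y, v)) (by fun_prop)
    have hA_ae : ∀ᵐ v ∂volume.restrict A, v ∈ A := ae_restrict_mem hA
    have hbound := norm_integral_smul_sub_integral_smul_le (hπ_integrable t y) (hπ_integrable t y')
      (hπint t y) (hπint t y') hb_meas.aestronglyMeasurable
      (ae_of_all _ (hπnonneg t y')) (hA_ae.mono fun v hv => hbLip t ht v hv y y')
      (hA_ae.mono fun v hv =>
        norm_le_mul_norm_add_of_norm_sub_le (hbLip t ht v hv) (hb0 t ht v hv) y)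
    rw [hπone, one_mul] at hbound
    subst hbtilde
    calc _ ≤ _ := hbound
      _ ≤ C₁ * ‖y - y'‖ + (C₁ * ‖y‖ + C₂) * (C₃ * ‖y - y'‖) := by
        gcongr
        exact hπLip t ht y y'
      _ = _ := by ring
  refine ⟨hestimate, fun t ht => ?_⟩
  refine locallyLipschitz_of_norm_sub_le_mul (K := C₁ + C₂ * C₃) (L := C₁ * C₃) (by positivity)
    fun y y' => (hestimate t ht y y').trans_eq (by ring)

/-- Local Lipschitz estimate for the aggregated exploratory drift
`b̃(t, y) = ∫_A b(t, y, v) π(v|t, y) dv`. -/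
theorem stmt_11 (A : Set ℝ) (hA : MeasurableSet A) (T : ℝ) (hT : 0 < T)
    (b : ℝ → EuclideanSpace ℝ (Fin 4) → ℝ → EuclideanSpace ℝ (Fin 4))
    (hbmeas : Measurable fun p : ℝ × EuclideanSpace ℝ (Fin 4) × ℝ => b p.1 p.2.1 p.2.2)
    (C₁ : ℝ) (hC₁ : 0 < C₁)
    (hbLip : ∀ t ∈ Set.Icc (0 : ℝ) T, ∀ v ∈ A, ∀ y y' : EuclideanSpace ℝ (Fin 4),
        ‖b t y v - b t y' v‖ ≤ C₁ * ‖y - y'‖)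
    (C₂ : ℝ) (hC₂ : 0 < C₂)
    (hb0 : ∀ t ∈ Set.Icc (0 : ℝ) T, ∀ v ∈ A, ‖b t 0 v‖ ≤ C₂)
    (π : ℝ → EuclideanSpace ℝ (Fin 4) → ℝ → ℝ)
    (hπmeas : ∀ t y, Measurable (π t y))
    (hπnonneg : ∀ t y v, 0 ≤ π t y v)
    (hπone : ∀ t y, (∫ v in A, π t y v) = 1)
    (hπint : ∀ t y, IntegrableOn (fun v => π t y v • b t y v) A)
    (C₃ : ℝ) (hC₃ : 0 < C₃)
    (hπLip : ∀ t ∈ Set.Icc (0 : ℝ) T, ∀ y y' : EuclideanSpace ℝ (Fin 4),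
        (∫ v in A, |π t y v - π t y' v|) ≤ C₃ * ‖y - y'‖)
    (btilde : ℝ → EuclideanSpace ℝ (Fin 4) → EuclideanSpace ℝ (Fin 4))
    (hbtilde : btilde = fun t y => ∫ v in A, π t y v • b t y v) :
    (∀ t ∈ Set.Icc (0 : ℝ) T, ∀ y y' : EuclideanSpace ℝ (Fin 4),
        ‖btilde t y - btilde t y'‖ ≤
          C₁ * ‖y - y'‖ + (C₁ * ‖y‖ + C₂) * C₃ * ‖y - y'‖) ∧
    (∀ t ∈ Set.Icc (0 : ℝ) T, LocallyLipschitz (btilde t)) :=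
  stmt_11_general A hA T b hbmeas C₁ hC₁ hbLip C₂ hC₂ hb0 π hπnonneg hπone hπint C₃ hC₃ hπLip btilde
    hbtilde
end
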